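/- Let d ≥ 1, λ₀ ∈ (0,1], δ := λ₀/200, and λ₁ ∈ [λ₀/2, λ₀]. There exists a constant C, depending only on d and λ₀, such that for all k, ξ, k', ξ' ∈ ℝ^d with |(k',ξ')| ≤ |(k,ξ)|/8 and all t ∈ [0,∞) one has |A(t,k+k',ξ+ξ') − A(t,k,ξ)| ≤ C · A(t,k,ξ) · A(t,k',ξ') · exp(−(λ₁/4)⟨k',ξ'⟩^{1/3}) · ⟨k,ξ⟩^{−2/3}, and the same inequality holds with A replaced by A♯ throughout. -/

import Mathlib

noncomputable section

/-- Japanese bracket `⟨r⟩ = (1+r²)^(1/2)`. -/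
def jap (r : ℝ) : ℝ := Real.sqrt (1 + r ^ 2)

/-- The weight exponent `λ(t,r)`. -/
def lamW (lam1 δ t r : ℝ) : ℝ :=
  lam1 * jap r ^ ((1:ℝ)/3) + δ * (1 + t) ^ (-δ) * jap r ^ ((1:ℝ)/3)
    + δ * (1 + t * jap r ^ (-(2:ℝ)/3)) ^ (-δ) * jap r ^ ((1:ℝ)/3)

/-- The weight exponent `λ♯(t,r)`. -/
def lamSharpW (lam1 δ t r : ℝ) : ℝ :=
  lam1 * jap r ^ ((1:ℝ)/3) - δ * (1 + t) ^ (-δ) * jap r ^ ((1:ℝ)/3)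
    - δ * (1 + t * jap r ^ (-(2:ℝ)/3)) ^ (-δ) * jap r ^ ((1:ℝ)/3)

/-- `⟨k,ξ⟩ = (1+|k|²+|ξ|²)^(1/2)`. -/
def brk2 {d : ℕ} (k ξ : EuclideanSpace ℝ (Fin d)) : ℝ := Real.sqrt (1 + ‖k‖ ^ 2 + ‖ξ‖ ^ 2)

/-- `|(k,ξ)|`, the Euclidean norm of `(k,ξ) ∈ ℝ^{2d}`. -/
def nrm2 {d : ℕ} (k ξ : EuclideanSpace ℝ (Fin d)) : ℝ := Real.sqrt (‖k‖ ^ 2 + ‖ξ‖ ^ 2)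

/-- The weight `A(t,k,ξ) = exp(λ(t,|(k,ξ)|))`. -/
def Aw {d : ℕ} (lam1 δ t : ℝ) (k ξ : EuclideanSpace ℝ (Fin d)) : ℝ :=
  Real.exp (lamW lam1 δ t (nrm2 k ξ))

/-- The weight `A♯(t,k,ξ) = exp(λ♯(t,|(k,ξ)|))`. -/
def AwSharp {d : ℕ} (lam1 δ t : ℝ) (k ξ : EuclideanSpace ℝ (Fin d)) : ℝ :=
  Real.exp (lamSharpW lam1 δ t (nrm2 k ξ))

open Real

lemma jap_sq (r : ℝ) : jap r ^ 2 = 1 + r ^ 2 := Real.sq_sqrt (by positivity)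

lemma one_le_jap (r : ℝ) : 1 ≤ jap r := by
  rw [show (1:ℝ) = Real.sqrt 1 by simp [Real.sqrt_one]]
  exact Real.sqrt_le_sqrt (by nlinarith [sq_nonneg r])

lemma jap_pos (r : ℝ) : 0 < jap r := lt_of_lt_of_le one_pos (one_le_jap r)

lemma le_jap {r : ℝ} (h : 0 ≤ r) : r ≤ jap r := by
  nlinarith [jap_sq r, jap_pos r]

lemma cube_of_third {x : ℝ} (hx : 0 ≤ x) : (x ^ ((1:ℝ)/3)) ^ (3:ℕ) = x := by
  rw [← Real.rpow_natCast (x ^ ((1:ℝ)/3)) 3, ← Real.rpow_mul hx]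
  norm_num

lemma sq_of_third {x : ℝ} (hx : 0 ≤ x) : (x ^ ((1:ℝ)/3)) ^ (2:ℕ) = x ^ ((2:ℝ)/3) := by
  rw [← Real.rpow_natCast (x ^ ((1:ℝ)/3)) 2, ← Real.rpow_mul hx]
  norm_num

lemma neg23 {x : ℝ} (hx : 0 < x) : x ^ (-(2:ℝ)/3) = 1 / (x ^ ((1:ℝ)/3)) ^ (2:ℕ) := by
  rw [sq_of_third hx.le, show -(2:ℝ)/3 = -((2:ℝ)/3) by ring, Real.rpow_neg hx.le, one_div]

lemma cbrt_sub_le {a b m : ℝ} (hm : 0 < m) (hmb : m ≤ b) (hba : b ≤ a) :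
    a ^ ((1:ℝ)/3) - b ^ ((1:ℝ)/3) ≤ (a - b) / (3 * m ^ ((2:ℝ)/3)) := by
  have hb : 0 < b := lt_of_lt_of_le hm hmb
  have ha : 0 < a := lt_of_lt_of_le hb hba
  set u := a ^ ((1:ℝ)/3) with hu
  set v := b ^ ((1:ℝ)/3) with hv
  set w := m ^ ((1:ℝ)/3) with hw
  have hwp : 0 < w := Real.rpow_pos_of_pos hm _
  have hwv : w ≤ v := Real.rpow_le_rpow hm.le hmb (by norm_num)
  have hvu : v ≤ u := Real.rpow_le_rpow hb.le hba (by norm_num)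
  have hu3 : u ^ (3:ℕ) = a := cube_of_third ha.le
  have hv3 : v ^ (3:ℕ) = b := cube_of_third hb.le
  have hw2 : m ^ ((2:ℝ)/3) = w ^ (2:ℕ) := (sq_of_third hm.le).symm
  rw [hw2, le_div_iff₀ (by positivity)]
  have h1 : 0 ≤ u - v := by linarith
  have hvp : 0 < v := lt_of_lt_of_le hwp hwv
  have h2 : 3 * w ^ (2:ℕ) ≤ u ^ 2 + u * v + v ^ 2 := by nlinarith
  have h3 : (u - v) * (3 * w ^ (2:ℕ)) ≤ (u - v) * (u ^ 2 + u * v + v ^ 2) :=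
    mul_le_mul_of_nonneg_left h2 h1
  have h4 : (u - v) * (u ^ 2 + u * v + v ^ 2) = u ^ (3:ℕ) - v ^ (3:ℕ) := by ring
  rw [hu3, hv3] at h4
  linarith

lemma rpow_neg_le_one {x e : ℝ} (hx : 1 ≤ x) (he : 0 ≤ e) : x ^ (-e) ≤ 1 :=
  Real.rpow_le_one_of_one_le_of_nonpos hx (by linarith)

lemma one_add_rpow_neg_sub {δ X Y : ℝ} (hδ0 : 0 < δ) (hδ1 : δ ≤ 1) (hX : 0 ≤ X) (hXY : X ≤ Y) :
    (1 + X) ^ (-δ) - (1 + Y) ^ (-δ) ≤ (Y - X) / (1 + Y) := by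
  have hY : 0 ≤ Y := le_trans hX hXY
  have h1X : (0:ℝ) < 1 + X := by linarith
  have h1Y : (0:ℝ) < 1 + Y := by linarith
  set ρ := (1 + X) / (1 + Y) with hρ
  have hρ0 : 0 < ρ := div_pos h1X h1Y
  have hρ1 : ρ ≤ 1 := by rw [hρ, div_le_one h1Y]; linarith
  have hρδ : ρ ≤ ρ ^ δ := by
    have := Real.rpow_le_rpow_of_exponent_ge hρ0 hρ1 hδ1
    rwa [Real.rpow_one] at this
  have hfact : (1 + Y) ^ (-δ) = (1 + X) ^ (-δ) * ρ ^ δ := by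
    rw [hρ, Real.div_rpow h1X.le h1Y.le, Real.rpow_neg h1X.le, Real.rpow_neg h1Y.le]
    field_simp
  have hXle1 : (1 + X) ^ (-δ) ≤ 1 := rpow_neg_le_one (by linarith) hδ0.le
  have hXpos : 0 < (1 + X) ^ (-δ) := Real.rpow_pos_of_pos h1X _
  have h1ρ : 0 ≤ 1 - ρ ^ δ := by
    have : ρ ^ δ ≤ 1 := Real.rpow_le_one hρ0.le hρ1 hδ0.le
    linarith
  calc (1 + X) ^ (-δ) - (1 + Y) ^ (-δ) = (1 + X) ^ (-δ) * (1 - ρ ^ δ) := by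
        rw [hfact]; ring
    _ ≤ 1 * (1 - ρ ^ δ) := mul_le_mul_of_nonneg_right hXle1 h1ρ
    _ ≤ 1 - ρ := by nlinarith
    _ = (Y - X) / (1 + Y) := by rw [hρ]; field_simp; ring

lemma t_div_le {t c : ℝ} (ht : 0 ≤ t) (hc : 0 < c) : t / (1 + t / c) ≤ c := by
  rw [div_le_iff₀ (by positivity)]
  have h : c * (1 + t / c) = c + t := by field_simp
  linarith

lemma pq_diff {δ t α β : ℝ} (hδ0 : 0 < δ) (hδ1 : δ ≤ 1) (ht : 0 ≤ t)
    (hα : 0 < α) (hαβ : α ≤ β) :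
    (1 + t / β ^ 2) ^ (-δ) - (1 + t / α ^ 2) ^ (-δ) ≤ 2 * (β - α) / α := by
  have hβ : 0 < β := lt_of_lt_of_le hα hαβ
  have hXY : t / β ^ 2 ≤ t / α ^ 2 :=
    div_le_div_of_nonneg_left ht (by positivity) (by nlinarith)
  have h1 := one_add_rpow_neg_sub hδ0 hδ1 (by positivity : (0:ℝ) ≤ t / β ^ 2) hXY
  have e1 : t / α ^ 2 - t / β ^ 2 = t * ((β ^ 2 - α ^ 2) / (α ^ 2 * β ^ 2)) := by
    field_simp
  have e2 : (t / α ^ 2 - t / β ^ 2) / (1 + t / α ^ 2)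
      = (t / (1 + t / α ^ 2)) * ((β ^ 2 - α ^ 2) / (α ^ 2 * β ^ 2)) := by
    rw [e1]; ring
  have h2 : (t / (1 + t / α ^ 2)) * ((β ^ 2 - α ^ 2) / (α ^ 2 * β ^ 2))
      ≤ α ^ 2 * ((β ^ 2 - α ^ 2) / (α ^ 2 * β ^ 2)) := by
    apply mul_le_mul_of_nonneg_right (t_div_le ht (by positivity))
    apply div_nonneg (by nlinarith) (by positivity)
  have e3 : α ^ 2 * ((β ^ 2 - α ^ 2) / (α ^ 2 * β ^ 2)) = (β ^ 2 - α ^ 2) / β ^ 2 := by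
    field_simp
  have h4 : (β ^ 2 - α ^ 2) / β ^ 2 ≤ 2 * (β - α) / α := by
    rw [div_le_div_iff₀ (by positivity) hα]
    nlinarith [mul_nonneg (sub_nonneg.2 hαβ) hα.le, sq_nonneg (β - α)]
  calc (1 + t / β ^ 2) ^ (-δ) - (1 + t / α ^ 2) ^ (-δ)
      ≤ (t / α ^ 2 - t / β ^ 2) / (1 + t / α ^ 2) := h1
    _ = (t / (1 + t / α ^ 2)) * ((β ^ 2 - α ^ 2) / (α ^ 2 * β ^ 2)) := e2
    _ ≤ α ^ 2 * ((β ^ 2 - α ^ 2) / (α ^ 2 * β ^ 2)) := h2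
    _ = (β ^ 2 - α ^ 2) / β ^ 2 := e3
    _ ≤ 2 * (β - α) / α := h4

lemma pq_mono {δ t α β : ℝ} (hδ0 : 0 < δ) (ht : 0 ≤ t) (hα : 0 < α) (hαβ : α ≤ β) :
    (1 + t / α ^ 2) ^ (-δ) ≤ (1 + t / β ^ 2) ^ (-δ) := by
  apply Real.rpow_le_rpow_of_nonpos (by positivity)
  · have : t / β ^ 2 ≤ t / α ^ 2 :=
      div_le_div_of_nonneg_left ht (by positivity) (by nlinarith [lt_of_lt_of_le hα hαβ])
    linarith
  · linarith

lemma gdiff {δ t u v : ℝ} (hδ0 : 0 < δ) (hδ1 : δ ≤ 1) (ht : 0 ≤ t) (hu : 0 < u)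
    (hv1 : 7/8 * u ≤ v) (hv2 : v ≤ 9/8 * u) :
    |(1 + t / v ^ 2) ^ (-δ) * v - (1 + t / u ^ 2) ^ (-δ) * u| ≤ 4 * |v - u| := by
  have hv : 0 < v := by linarith
  set P := (1 + t / v ^ 2) ^ (-δ) with hP
  set Q := (1 + t / u ^ 2) ^ (-δ) with hQ
  have hPpos : 0 < P := Real.rpow_pos_of_pos (by positivity) _
  have hP1 : P ≤ 1 := rpow_neg_le_one (by nlinarith [div_nonneg ht (sq_nonneg v)]) hδ0.le
  have key : P * v - Q * u = P * (v - u) + (P - Q) * u := by ring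
  rw [key]
  have habs : |P * (v - u)| ≤ |v - u| := by
    rw [abs_mul, abs_of_pos hPpos]
    nlinarith [abs_nonneg (v - u)]
  have hPQ : |(P - Q) * u| ≤ 3 * |v - u| := by
    rw [abs_mul, abs_of_pos hu]
    rcases le_total u v with huv | hvu
    · have h1 : P - Q ≤ 2 * (v - u) / u := pq_diff hδ0 hδ1 ht hu huv
      have h2 : Q ≤ P := pq_mono hδ0 ht hu huv
      have habs2 : |P - Q| = P - Q := abs_of_nonneg (by linarith)
      rw [habs2, abs_of_nonneg (by linarith : (0:ℝ) ≤ v - u)]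
      have : (2 * (v - u) / u) * u = 2 * (v - u) := by field_simp
      nlinarith [mul_le_mul_of_nonneg_right h1 hu.le]
    · have h1 : Q - P ≤ 2 * (u - v) / v := pq_diff hδ0 hδ1 ht hv hvu
      have h2 : P ≤ Q := pq_mono hδ0 ht hv hvu
      have habs2 : |P - Q| = Q - P := by rw [abs_sub_comm]; exact abs_of_nonneg (by linarith)
      rw [habs2, abs_of_nonpos (by linarith : v - u ≤ 0)]
      have h3 : (Q - P) * u ≤ (2 * (u - v) / v) * u := mul_le_mul_of_nonneg_right h1 hu.le
      have h4 : (2 * (u - v) / v) * u ≤ 3 * (u - v) := by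
        rw [div_mul_eq_mul_div, div_le_iff₀ hv]
        nlinarith [mul_nonneg (sub_nonneg.2 hvu) hu.le]
      linarith
  calc |P * (v - u) + (P - Q) * u| ≤ |P * (v - u)| + |(P - Q) * u| := abs_add_le _ _
    _ ≤ |v - u| + 3 * |v - u| := add_le_add habs hPQ
    _ = 4 * |v - u| := by ring

lemma jap_mono {a b : ℝ} (ha : 0 ≤ a) (hab : a ≤ b) : jap a ≤ jap b :=
  Real.sqrt_le_sqrt (by nlinarith)

lemma jap_lip {a b : ℝ} (ha : 0 ≤ a) (hab : a ≤ b) : jap b - jap a ≤ b - a := by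
  have h1 := jap_sq a
  have h2 := jap_sq b
  have h3 := le_jap ha
  have h4 := le_jap (le_trans ha hab)
  have h5 := jap_pos a
  have h6 := jap_pos b
  nlinarith [jap_mono ha hab]

lemma lamW_eq (lam1 δ t r : ℝ) :
    lamW lam1 δ t r = lam1 * (jap r ^ ((1:ℝ)/3))
      + (δ * (1 + t) ^ (-δ)) * (jap r ^ ((1:ℝ)/3))
      + δ * ((1 + t / (jap r ^ ((1:ℝ)/3)) ^ (2:ℕ)) ^ (-δ) * (jap r ^ ((1:ℝ)/3))) := by
  rw [lamW, neg23 (jap_pos r), mul_one_div]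
  ring

lemma lamSharpW_eq (lam1 δ t r : ℝ) :
    lamSharpW lam1 δ t r = lam1 * (jap r ^ ((1:ℝ)/3))
      - (δ * (1 + t) ^ (-δ)) * (jap r ^ ((1:ℝ)/3))
      - δ * ((1 + t / (jap r ^ ((1:ℝ)/3)) ^ (2:ℕ)) ^ (-δ) * (jap r ^ ((1:ℝ)/3))) := by
  rw [lamSharpW, neg23 (jap_pos r), mul_one_div]
  ring

set_option maxHeartbeats 1000000 in
lemma lam_diff {lam0 lam1 t r r' r₁ : ℝ}
    (h0 : 0 < lam0) (h1 : lam0 ≤ 1) (hl : lam0/2 ≤ lam1) (hl' : lam1 ≤ lam0)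
    (ht : 0 ≤ t) (hr' : 0 ≤ r') (h8 : r' ≤ r/8) (hlo : r - r' ≤ r₁) (hhi : r₁ ≤ r + r') :
    |lamW lam1 (lam0/200) t r₁ - lamW lam1 (lam0/200) t r|
        ≤ lam0/2 * r' * jap r ^ (-(2:ℝ)/3)
      ∧ |lamSharpW lam1 (lam0/200) t r₁ - lamSharpW lam1 (lam0/200) t r|
        ≤ lam0/2 * r' * jap r ^ (-(2:ℝ)/3) := by
  set δ := lam0/200 with hδ
  have hδ0 : 0 < δ := by rw [hδ]; linarith
  have hδ1 : δ ≤ 1 := by rw [hδ]; linarith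
  have hr : 0 ≤ r := by linarith
  have hr₁ : 0 ≤ r₁ := by linarith
  set x := jap r with hxd
  set y := jap r₁ with hyd
  have hx : 0 < x := jap_pos r
  have hy : 0 < y := jap_pos r₁
  have h1x : 1 ≤ x := one_le_jap r
  -- bracket comparison
  have hy1 : 7/8 * x ≤ y := by
    have hr78 : 7/8 * r ≤ r₁ := by linarith
    have h2 : y ^ 2 = 1 + r₁ ^ 2 := jap_sq r₁
    have h3 : x ^ 2 = 1 + r ^ 2 := jap_sq r
    nlinarith [sq_nonneg (y - 7/8*x), sq_nonneg r]
  have hy2 : y ≤ 9/8 * x := by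
    have hr98 : r₁ ≤ 9/8 * r := by linarith
    have h2 : y ^ 2 = 1 + r₁ ^ 2 := jap_sq r₁
    have h3 : x ^ 2 = 1 + r ^ 2 := jap_sq r
    nlinarith [sq_nonneg (9/8*x - y), sq_nonneg r]
  have hyx : |y - x| ≤ r' := by
    rcases le_total r r₁ with h | h
    · have := jap_lip hr h
      have := jap_mono hr h
      rw [abs_of_nonneg (by rw [hxd, hyd]; linarith)]
      rw [hxd, hyd]; linarith
    · have := jap_lip hr₁ h
      have := jap_mono hr₁ h
      rw [abs_of_nonpos (by rw [hxd, hyd]; linarith)]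
      rw [hxd, hyd]; linarith
  set u := x ^ ((1:ℝ)/3) with hud
  set v := y ^ ((1:ℝ)/3) with hvd
  have hu : 0 < u := Real.rpow_pos_of_pos hx _
  have hv : 0 < v := Real.rpow_pos_of_pos hy _
  have hu2 : u ^ (2:ℕ) = x ^ ((2:ℝ)/3) := sq_of_third hx.le
  have h78 : (7/8 : ℝ) ≤ (7/8 : ℝ) ^ ((1:ℝ)/3) := by
    have := Real.rpow_le_rpow_of_exponent_ge (show (0:ℝ) < 7/8 by norm_num)
      (by norm_num) (show (1:ℝ)/3 ≤ 1 by norm_num)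
    rwa [Real.rpow_one] at this
  have h98 : ((9/8 : ℝ)) ^ ((1:ℝ)/3) ≤ 9/8 := by
    have := Real.rpow_le_rpow_of_exponent_le (show (1:ℝ) ≤ 9/8 by norm_num)
      (show (1:ℝ)/3 ≤ 1 by norm_num)
    rwa [Real.rpow_one] at this
  have hv1 : 7/8 * u ≤ v := by
    have h1 : ((7/8 : ℝ) * x) ^ ((1:ℝ)/3) ≤ v :=
      Real.rpow_le_rpow (by positivity) hy1 (by norm_num)
    rw [Real.mul_rpow (by norm_num) hx.le] at h1
    nlinarith [Real.rpow_nonneg hx.le ((1:ℝ)/3)]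
  have hv2 : v ≤ 9/8 * u := by
    have h1 : v ≤ ((9/8 : ℝ) * x) ^ ((1:ℝ)/3) :=
      Real.rpow_le_rpow hy.le hy2 (by norm_num)
    rw [Real.mul_rpow (by norm_num) hx.le] at h1
    nlinarith [Real.rpow_nonneg hx.le ((1:ℝ)/3), Real.rpow_pos_of_pos hx ((1:ℝ)/3)]
  -- cube root difference
  have hm78 : (7/8 : ℝ) ≤ (7/8 : ℝ) ^ ((2:ℝ)/3) := by
    have := Real.rpow_le_rpow_of_exponent_ge (show (0:ℝ) < 7/8 by norm_num)
      (by norm_num) (show (2:ℝ)/3 ≤ 1 by norm_num)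
    rwa [Real.rpow_one] at this
  have hmkey : 21/8 * u ^ (2:ℕ) ≤ 3 * ((7/8) * x) ^ ((2:ℝ)/3) := by
    rw [Real.mul_rpow (by norm_num) hx.le, hu2]
    nlinarith [Real.rpow_pos_of_pos hx ((2:ℝ)/3)]
  have hvu : |v - u| ≤ 8/21 * (r' / u ^ (2:ℕ)) := by
    have hmpos : (0:ℝ) < 7/8 * x := by linarith
    rcases le_total y x with h | h
    · have hc := cbrt_sub_le hmpos hy1 h
      have hvle : v ≤ u := Real.rpow_le_rpow hy.le h (by norm_num)
      rw [abs_of_nonpos (by linarith)]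
      have hxy : x - y ≤ r' := by
        have := abs_le.1 hyx
        linarith [this.1]
      have hd : (x - y) / (3 * (7/8 * x) ^ ((2:ℝ)/3)) ≤ r' / (21/8 * u ^ (2:ℕ)) := by
        apply div_le_div₀ hr' hxy (by positivity) hmkey
      have he : r' / (21/8 * u ^ (2:ℕ)) = 8/21 * (r' / u ^ (2:ℕ)) := by
        field_simp
      calc -(v - u) = x ^ ((1:ℝ)/3) - y ^ ((1:ℝ)/3) := by rw [hud, hvd]; ring
        _ ≤ (x - y) / (3 * (7/8 * x) ^ ((2:ℝ)/3)) := hc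
        _ ≤ r' / (21/8 * u ^ (2:ℕ)) := hd
        _ = 8/21 * (r' / u ^ (2:ℕ)) := he
    · have hm' : 7/8 * x ≤ x := by linarith
      have hc := cbrt_sub_le hmpos hm' h
      have hule : u ≤ v := Real.rpow_le_rpow hx.le h (by norm_num)
      rw [abs_of_nonneg (by linarith)]
      have hxy : y - x ≤ r' := by
        have := abs_le.1 hyx
        linarith [this.2]
      have hd : (y - x) / (3 * (7/8 * x) ^ ((2:ℝ)/3)) ≤ r' / (21/8 * u ^ (2:ℕ)) := by
        apply div_le_div₀ hr' hxy (by positivity) hmkey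
      have he : r' / (21/8 * u ^ (2:ℕ)) = 8/21 * (r' / u ^ (2:ℕ)) := by
        field_simp
      calc v - u ≤ (y - x) / (3 * (7/8 * x) ^ ((2:ℝ)/3)) := hc
        _ ≤ r' / (21/8 * u ^ (2:ℕ)) := hd
        _ = 8/21 * (r' / u ^ (2:ℕ)) := he
  -- component bounds
  have hg := gdiff hδ0 hδ1 ht hu hv1 hv2
  have hpt : (0:ℝ) ≤ (1 + t) ^ (-δ) := (Real.rpow_pos_of_pos (by linarith) _).le
  have hpt1 : (1 + t) ^ (-δ) ≤ 1 := rpow_neg_le_one (by linarith) hδ0.le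
  have hlam1 : 0 < lam1 := by linarith
  have hcomb : ∀ s : ℝ, |s| = 1 →
      |lam1 * (v - u) + s * ((δ * (1 + t) ^ (-δ)) * (v - u))
        + s * (δ * ((1 + t / v ^ (2:ℕ)) ^ (-δ) * v - (1 + t / u ^ (2:ℕ)) ^ (-δ) * u))|
      ≤ lam0/2 * r' * x ^ (-(2:ℝ)/3) := by
    intro s hs
    have tri : |lam1 * (v - u) + s * ((δ * (1 + t) ^ (-δ)) * (v - u))
        + s * (δ * ((1 + t / v ^ (2:ℕ)) ^ (-δ) * v - (1 + t / u ^ (2:ℕ)) ^ (-δ) * u))|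
        ≤ |lam1 * (v - u)| + |(δ * (1 + t) ^ (-δ)) * (v - u)|
          + |δ * ((1 + t / v ^ (2:ℕ)) ^ (-δ) * v - (1 + t / u ^ (2:ℕ)) ^ (-δ) * u)| := by
      have e1 : |s * ((δ * (1 + t) ^ (-δ)) * (v - u))|
          = |(δ * (1 + t) ^ (-δ)) * (v - u)| := by
        rw [abs_mul, hs, one_mul]
      have e2 : |s * (δ * ((1 + t / v ^ (2:ℕ)) ^ (-δ) * v - (1 + t / u ^ (2:ℕ)) ^ (-δ) * u))|
          = |δ * ((1 + t / v ^ (2:ℕ)) ^ (-δ) * v - (1 + t / u ^ (2:ℕ)) ^ (-δ) * u)| := by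
        rw [abs_mul, hs, one_mul]
      calc _ ≤ |lam1 * (v - u) + s * ((δ * (1 + t) ^ (-δ)) * (v - u))|
            + |s * (δ * ((1 + t / v ^ (2:ℕ)) ^ (-δ) * v - (1 + t / u ^ (2:ℕ)) ^ (-δ) * u))| :=
          abs_add_le _ _
        _ ≤ |lam1 * (v - u)| + |s * ((δ * (1 + t) ^ (-δ)) * (v - u))|
            + |s * (δ * ((1 + t / v ^ (2:ℕ)) ^ (-δ) * v - (1 + t / u ^ (2:ℕ)) ^ (-δ) * u))| :=
          add_le_add_left (abs_add_le _ _) _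
        _ = _ := by rw [e1, e2]
    have b1 : |lam1 * (v - u)| ≤ lam1 * |v - u| := by
      rw [abs_mul, abs_of_pos hlam1]
    have b2 : |(δ * (1 + t) ^ (-δ)) * (v - u)| ≤ δ * |v - u| := by
      rw [abs_mul, abs_of_nonneg (by positivity)]
      have : δ * (1 + t) ^ (-δ) ≤ δ * 1 := by nlinarith
      nlinarith [abs_nonneg (v - u)]
    have b3 : |δ * ((1 + t / v ^ (2:ℕ)) ^ (-δ) * v - (1 + t / u ^ (2:ℕ)) ^ (-δ) * u)|
        ≤ δ * (4 * |v - u|) := by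
      rw [abs_mul, abs_of_pos hδ0]
      exact mul_le_mul_of_nonneg_left hg hδ0.le
    have hsum : lam1 * |v - u| + δ * |v - u| + δ * (4 * |v - u|)
        ≤ (lam1 + 5 * δ) * (8/21 * (r' / u ^ (2:ℕ))) := by
      have h5 : lam1 * |v - u| + δ * |v - u| + δ * (4 * |v - u|)
          = (lam1 + 5 * δ) * |v - u| := by ring
      rw [h5]
      apply mul_le_mul_of_nonneg_left hvu (by linarith)
    have hfin : (lam1 + 5 * δ) * (8/21 * (r' / u ^ (2:ℕ)))
        ≤ lam0/2 * r' * x ^ (-(2:ℝ)/3) := by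
      rw [neg23 hx]
      have h6 : lam1 + 5 * δ ≤ 41/40 * lam0 := by rw [hδ]; linarith
      have h7 : 0 ≤ r' / u ^ (2:ℕ) := by positivity
      have h8' : lam0/2 * r' * (1 / u ^ (2:ℕ)) = lam0/2 * (r' / u ^ (2:ℕ)) := by ring
      rw [h8']
      nlinarith
    linarith
  constructor
  · have e : lamW lam1 δ t r₁ - lamW lam1 δ t r
        = lam1 * (v - u) + 1 * ((δ * (1 + t) ^ (-δ)) * (v - u))
          + 1 * (δ * ((1 + t / v ^ (2:ℕ)) ^ (-δ) * v - (1 + t / u ^ (2:ℕ)) ^ (-δ) * u)) := by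
      rw [lamW_eq lam1 δ t r₁, lamW_eq lam1 δ t r]
      ring
    rw [e]
    exact hcomb 1 (by norm_num)
  · have e : lamSharpW lam1 δ t r₁ - lamSharpW lam1 δ t r
        = lam1 * (v - u) + (-1) * ((δ * (1 + t) ^ (-δ)) * (v - u))
          + (-1) * (δ * ((1 + t / v ^ (2:ℕ)) ^ (-δ) * v - (1 + t / u ^ (2:ℕ)) ^ (-δ) * u)) := by
      rw [lamSharpW_eq lam1 δ t r₁, lamSharpW_eq lam1 δ t r]
      ring
    rw [e]
    exact hcomb (-1) (by norm_num)

lemma abs_exp_sub_exp {p q D : ℝ} (h : |p - q| ≤ D) :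
    |Real.exp p - Real.exp q| ≤ D * Real.exp D * Real.exp q := by
  have hD : 0 ≤ D := le_trans (abs_nonneg _) h
  have key : ∀ d : ℝ, |d| ≤ D → |Real.exp d - 1| ≤ D * Real.exp D := by
    intro d hd
    have h1 : Real.exp d - 1 ≤ D * Real.exp D := by
      have h2 : Real.exp d ≤ Real.exp D := Real.exp_le_exp.2 (le_trans (le_abs_self d) hd)
      have h3 : Real.exp D - 1 ≤ D * Real.exp D := by
        have ha := Real.add_one_le_exp (-D)
        have hm : (-D + 1) * Real.exp D ≤ Real.exp (-D) * Real.exp D :=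
          mul_le_mul_of_nonneg_right ha (Real.exp_pos D).le
        rw [← Real.exp_add, neg_add_cancel, Real.exp_zero] at hm
        nlinarith
      linarith
    have h4 : 1 - Real.exp d ≤ D * Real.exp D := by
      have h5 : -D ≤ d := by
        have := abs_le.1 hd; linarith [this.1]
      have h6 : Real.exp (-D) ≤ Real.exp d := Real.exp_le_exp.2 h5
      have h7 : 1 - Real.exp (-D) ≤ D := by
        nlinarith [Real.add_one_le_exp (-D)]
      have h8 : (1:ℝ) ≤ Real.exp D := Real.one_le_exp hD
      nlinarith
    rw [abs_le]; constructor <;> linarith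
  have e : Real.exp p - Real.exp q = (Real.exp (p - q) - 1) * Real.exp q := by
    rw [sub_mul, ← Real.exp_add]; ring_nf
  rw [e, abs_mul, abs_of_pos (Real.exp_pos q)]
  exact mul_le_mul_of_nonneg_right (key _ h) (Real.exp_pos q).le

lemma cube_le_exp {q : ℝ} (hq : 0 ≤ q) : q ^ (3:ℕ) ≤ 27 * Real.exp q := by
  have h1 : 1 + q/3 ≤ Real.exp (q/3) := by
    have := Real.add_one_le_exp (q/3); linarith
  have h2 : (1 + q/3) ^ (3:ℕ) ≤ (Real.exp (q/3)) ^ (3:ℕ) :=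
    pow_le_pow_left₀ (by linarith) h1 3
  have h3 : (Real.exp (q/3)) ^ (3:ℕ) = Real.exp q := by
    rw [← Real.exp_nat_mul]; congr 1; push_cast; ring
  nlinarith [sq_nonneg q, sq_nonneg (q/3)]

set_option maxHeartbeats 1000000 in
lemma DexpD_bound {lam0 r r' : ℝ} (h0 : 0 < lam0) (h1 : lam0 ≤ 1)
    (hr' : 0 ≤ r') (h8 : r' ≤ r/8) :
    (lam0/2 * r' * jap r ^ (-(2:ℝ)/3)) * Real.exp (lam0/2 * r' * jap r ^ (-(2:ℝ)/3))
      ≤ 2916/lam0^3 * Real.exp (lam0/3 * jap r' ^ ((1:ℝ)/3)) * jap r ^ (-(2:ℝ)/3) := by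
  have hr : 0 ≤ r := by linarith
  set x := jap r with hxd
  set z := jap r' with hzd
  have hx : 0 < x := jap_pos r
  have h1x : 1 ≤ x := one_le_jap r
  have h1z : 1 ≤ z := one_le_jap r'
  have hz : 0 < z := jap_pos r'
  set s := z ^ ((1:ℝ)/3) with hsd
  set u := x ^ ((1:ℝ)/3) with hud
  have hs : 0 < s := Real.rpow_pos_of_pos hz _
  have hu : 0 < u := Real.rpow_pos_of_pos hx _
  have hxm : x ^ (-(2:ℝ)/3) = 1 / u ^ (2:ℕ) := neg23 hx
  have hxmpos : 0 < x ^ (-(2:ℝ)/3) := Real.rpow_pos_of_pos hx _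
  have hxm1 : x ^ (-(2:ℝ)/3) ≤ 1 := by
    rw [show -(2:ℝ)/3 = -((2:ℝ)/3) by ring]
    exact rpow_neg_le_one h1x (by norm_num)
  set D := lam0/2 * r' * x ^ (-(2:ℝ)/3) with hDd
  have hD0 : 0 ≤ D := by positivity
  have hs0 : (0:ℝ) ≤ lam0/3 * s := by positivity
  have hE1 : (1:ℝ) ≤ Real.exp (lam0/3 * s) := Real.one_le_exp hs0
  rcases le_total r' 2 with hc | hc
  · -- small r'
    have hD1 : D ≤ lam0 * x ^ (-(2:ℝ)/3) := by
      rw [hDd]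
      nlinarith [mul_nonneg (mul_nonneg (by linarith : (0:ℝ) ≤ 2 - r') hxmpos.le) h0.le]
    have hD2 : D ≤ 1 := by nlinarith
    have hE : Real.exp D ≤ Real.exp 1 := Real.exp_le_exp.2 hD2
    have hE3 : Real.exp (1:ℝ) ≤ 3 := by nlinarith [Real.exp_one_lt_d9]
    have hc3 : 3 * lam0 ≤ 2916/lam0^3 := by
      rw [le_div_iff₀ (by positivity)]
      nlinarith [pow_pos h0 3, pow_le_one₀ h0.le h1 (n := 4), sq_nonneg lam0]
    calc D * Real.exp D ≤ (lam0 * x ^ (-(2:ℝ)/3)) * 3 := by nlinarith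
      _ = 3 * lam0 * x ^ (-(2:ℝ)/3) := by ring
      _ ≤ 2916/lam0^3 * x ^ (-(2:ℝ)/3) := mul_le_mul_of_nonneg_right hc3 hxmpos.le
      _ = 2916/lam0^3 * 1 * x ^ (-(2:ℝ)/3) := by ring
      _ ≤ 2916/lam0^3 * Real.exp (lam0/3 * s) * x ^ (-(2:ℝ)/3) := by
          apply mul_le_mul_of_nonneg_right _ hxmpos.le
          exact mul_le_mul_of_nonneg_left hE1 (by positivity)
  · -- large r' : r' ≥ 2, so z ≤ x/7
    have hzx : 7 * z ≤ x := by
      have hz2 : z ^ 2 = 1 + r' ^ 2 := jap_sq r'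
      have hx2 : x ^ 2 = 1 + r ^ 2 := jap_sq r
      have hr2 : r' ^ 2 ≤ (r/8) ^ 2 := by nlinarith
      nlinarith [sq_nonneg (x - 7*z), sq_nonneg r']
    have hsu : s ≤ u := Real.rpow_le_rpow hz.le (by linarith) (by norm_num)
    have hs3 : s ^ (3:ℕ) = z := cube_of_third hz.le
    have hu3 : u ^ (3:ℕ) = x := cube_of_third hx.le
    have hsq : 3 * s ^ (2:ℕ) ≤ u ^ (2:ℕ) := by
      have h7 : 7 * s ^ (3:ℕ) ≤ u ^ (3:ℕ) := by rw [hs3, hu3]; linarith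
      nlinarith [mul_nonneg (mul_nonneg hs.le (by linarith : (0:ℝ) ≤ 2*u - s))
        (by linarith : (0:ℝ) ≤ u - s), hs, hu]
    have hDz : D ≤ lam0/2 * z * x ^ (-(2:ℝ)/3) := by
      rw [hDd]
      have hrz := le_jap hr'
      nlinarith [mul_nonneg (mul_nonneg (by linarith : (0:ℝ) ≤ z - r') hxmpos.le) h0.le]
    have hDs : D ≤ lam0/6 * s := by
      have e1 : lam0/2 * z * x ^ (-(2:ℝ)/3) = lam0/2 * (s^(3:ℕ) / u^(2:ℕ)) := by
        rw [hxm, hs3]; ring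
      have e2 : s ^ (3:ℕ) / u ^ (2:ℕ) ≤ s / 3 := by
        rw [div_le_iff₀ (by positivity)]
        nlinarith
      calc D ≤ lam0/2 * z * x ^ (-(2:ℝ)/3) := hDz
        _ = lam0/2 * (s^(3:ℕ) / u^(2:ℕ)) := e1
        _ ≤ lam0/2 * (s/3) := by nlinarith
        _ = lam0/6 * s := by ring
    have hcube : z ≤ 5832/lam0^3 * Real.exp (lam0/6 * s) := by
      have hce := cube_le_exp (q := lam0/6 * s) (by positivity)
      have e3 : (lam0/6 * s) ^ (3:ℕ) = lam0^3/216 * s^(3:ℕ) := by ring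
      rw [e3, hs3] at hce
      rw [show (5832:ℝ)/lam0^3 * Real.exp (lam0/6 * s)
          = 5832 * Real.exp (lam0/6 * s)/lam0^3 by ring,
        le_div_iff₀ (by positivity : (0:ℝ) < lam0^3)]
      nlinarith
    have hDb : D ≤ lam0/2 * (5832/lam0^3 * Real.exp (lam0/6 * s)) * x ^ (-(2:ℝ)/3) := by
      calc D ≤ lam0/2 * z * x ^ (-(2:ℝ)/3) := hDz
        _ ≤ _ := by
          apply mul_le_mul_of_nonneg_right _ hxmpos.le
          exact mul_le_mul_of_nonneg_left hcube (by linarith)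
    have hED : Real.exp D ≤ Real.exp (lam0/6 * s) := Real.exp_le_exp.2 hDs
    calc D * Real.exp D
        ≤ (lam0/2 * (5832/lam0^3 * Real.exp (lam0/6 * s)) * x ^ (-(2:ℝ)/3))
          * Real.exp (lam0/6 * s) := by
          apply mul_le_mul hDb hED (Real.exp_pos _).le
          positivity
      _ = 2916/lam0^3 * lam0 * (Real.exp (lam0/6 * s) * Real.exp (lam0/6 * s))
            * x ^ (-(2:ℝ)/3) := by ring
      _ = 2916/lam0^3 * lam0 * Real.exp (lam0/3 * s) * x ^ (-(2:ℝ)/3) := by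
          rw [← Real.exp_add, show lam0/6 * s + lam0/6 * s = lam0/3 * s by ring]
      _ ≤ 2916/lam0^3 * Real.exp (lam0/3 * s) * x ^ (-(2:ℝ)/3) := by
          have h9 : 2916/lam0^3 * lam0 ≤ 2916/lam0^3 := by
            nlinarith [mul_nonneg (by positivity : (0:ℝ) ≤ 2916/lam0^3)
              (by linarith : (0:ℝ) ≤ 1 - lam0)]
          exact mul_le_mul_of_nonneg_right
            (mul_le_mul_of_nonneg_right h9 (Real.exp_pos _).le) hxmpos.le

set_option maxHeartbeats 1000000 in
lemma main_est {lam0 lam1 t r r' : ℝ} (h0 : 0 < lam0) (h1 : lam0 ≤ 1)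
    (hl : lam0/2 ≤ lam1) (hl' : lam1 ≤ lam0)
    (hr' : 0 ≤ r') (h8 : r' ≤ r/8) (μ1 μ μ' : ℝ)
    (hμdiff : |μ1 - μ| ≤ lam0/2 * r' * jap r ^ (-(2:ℝ)/3))
    (hμ' : (lam1 - lam0/100) * jap r' ^ ((1:ℝ)/3) ≤ μ') :
    |Real.exp μ1 - Real.exp μ| ≤ 3000/lam0^3 * Real.exp μ * Real.exp μ' *
      Real.exp (-(lam1/4) * jap r' ^ ((1:ℝ)/3)) * jap r ^ (-(2:ℝ)/3) := by
  have hx : 0 < jap r := jap_pos r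
  have hz : 0 < jap r' := jap_pos r'
  have hs : 0 < jap r' ^ ((1:ℝ)/3) := Real.rpow_pos_of_pos hz _
  have hxmpos : 0 < jap r ^ (-(2:ℝ)/3) := Real.rpow_pos_of_pos hx _
  set s := jap r' ^ ((1:ℝ)/3)
  set X := jap r ^ (-(2:ℝ)/3)
  set D := lam0/2 * r' * X with hDd
  have stepA : |Real.exp μ1 - Real.exp μ| ≤ D * Real.exp D * Real.exp μ :=
    abs_exp_sub_exp hμdiff
  have stepB : D * Real.exp D ≤ 2916/lam0^3 * Real.exp (lam0/3 * s) * X :=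
    DexpD_bound h0 h1 hr' h8
  have stepC : Real.exp (lam0/3 * s) ≤ Real.exp μ' * Real.exp (-(lam1/4) * s) := by
    rw [← Real.exp_add]
    apply Real.exp_le_exp.2
    nlinarith
  have hC : (0:ℝ) < 2916/lam0^3 := by positivity
  calc |Real.exp μ1 - Real.exp μ| ≤ D * Real.exp D * Real.exp μ := stepA
    _ ≤ (2916/lam0^3 * Real.exp (lam0/3 * s) * X) * Real.exp μ :=
        mul_le_mul_of_nonneg_right stepB (Real.exp_pos μ).le
    _ ≤ (2916/lam0^3 * (Real.exp μ' * Real.exp (-(lam1/4) * s)) * X) * Real.exp μ :=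
        mul_le_mul_of_nonneg_right (mul_le_mul_of_nonneg_right
          (mul_le_mul_of_nonneg_left stepC hC.le) hxmpos.le) (Real.exp_pos μ).le
    _ = 2916/lam0^3 * Real.exp μ * Real.exp μ' * Real.exp (-(lam1/4) * s) * X := by ring
    _ ≤ 3000/lam0^3 * Real.exp μ * Real.exp μ' * Real.exp (-(lam1/4) * s) * X := by
        have h29 : (2916:ℝ)/lam0^3 ≤ 3000/lam0^3 := by gcongr <;> norm_num
        exact mul_le_mul_of_nonneg_right (mul_le_mul_of_nonneg_right
          (mul_le_mul_of_nonneg_right (mul_le_mul_of_nonneg_right h29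
            (Real.exp_pos μ).le) (Real.exp_pos μ').le) (Real.exp_pos _).le) hxmpos.le

lemma lamW_lower {lam0 lam1 t r' : ℝ} (h0 : 0 < lam0) (hl : lam0/2 ≤ lam1) (ht : 0 ≤ t) :
    (lam1 - lam0/100) * jap r' ^ ((1:ℝ)/3) ≤ lamW lam1 (lam0/200) t r' := by
  rw [lamW]
  have hs : 0 ≤ jap r' ^ ((1:ℝ)/3) := (Real.rpow_pos_of_pos (jap_pos r') _).le
  have h2 : 0 ≤ (1 + t) ^ (-(lam0/200)) := (Real.rpow_pos_of_pos (by linarith) _).le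
  have h3 : 0 ≤ (1 + t * jap r' ^ (-(2:ℝ)/3)) ^ (-(lam0/200)) := by
    have : 0 ≤ t * jap r' ^ (-(2:ℝ)/3) :=
      mul_nonneg ht (Real.rpow_pos_of_pos (jap_pos r') _).le
    exact (Real.rpow_pos_of_pos (by linarith) _).le
  nlinarith [mul_nonneg (mul_nonneg (by linarith : (0:ℝ) ≤ lam0/200) h2) hs,
    mul_nonneg (mul_nonneg (by linarith : (0:ℝ) ≤ lam0/200) h3) hs]

lemma lamSharpW_lower {lam0 lam1 t r' : ℝ} (h0 : 0 < lam0) (hl : lam0/2 ≤ lam1) (ht : 0 ≤ t) :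
    (lam1 - lam0/100) * jap r' ^ ((1:ℝ)/3) ≤ lamSharpW lam1 (lam0/200) t r' := by
  rw [lamSharpW]
  have hs : 0 ≤ jap r' ^ ((1:ℝ)/3) := (Real.rpow_pos_of_pos (jap_pos r') _).le
  have h2 : (1 + t) ^ (-(lam0/200)) ≤ 1 := rpow_neg_le_one (by linarith) (by linarith)
  have h3 : (1 + t * jap r' ^ (-(2:ℝ)/3)) ^ (-(lam0/200)) ≤ 1 := by
    have : 0 ≤ t * jap r' ^ (-(2:ℝ)/3) :=
      mul_nonneg ht (Real.rpow_pos_of_pos (jap_pos r') _).le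
    exact rpow_neg_le_one (by linarith) (by linarith)
  nlinarith [mul_nonneg (by linarith : (0:ℝ) ≤ lam0/200) hs,
    mul_nonneg (mul_nonneg (by linarith : (0:ℝ) ≤ lam0/200)
      (by linarith : (0:ℝ) ≤ 1 - (1 + t) ^ (-(lam0/200)))) hs,
    mul_nonneg (mul_nonneg (by linarith : (0:ℝ) ≤ lam0/200)
      (by linarith : (0:ℝ) ≤ 1 - (1 + t * jap r' ^ (-(2:ℝ)/3)) ^ (-(lam0/200)))) hs]

/-- `⟨k,ξ⟩ = (1+|k|²+|ξ|²)^(1/2)`. -/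
lemma brk2_eq {d : ℕ} (k ξ : EuclideanSpace ℝ (Fin d)) : brk2 k ξ = jap (nrm2 k ξ) := by
  rw [brk2, nrm2, jap, Real.sq_sqrt (by positivity)]
  ring_nf

lemma sqrt_pair_le (a b c dd : ℝ) (ha : 0 ≤ a) (hb : 0 ≤ b) (hc : 0 ≤ c) (hd : 0 ≤ dd) :
    Real.sqrt ((a + c) ^ 2 + (b + dd) ^ 2)
      ≤ Real.sqrt (a ^ 2 + b ^ 2) + Real.sqrt (c ^ 2 + dd ^ 2) := by
  set S := Real.sqrt (a ^ 2 + b ^ 2) with hS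
  set T := Real.sqrt (c ^ 2 + dd ^ 2) with hT
  have hS0 : 0 ≤ S := Real.sqrt_nonneg _
  have hT0 : 0 ≤ T := Real.sqrt_nonneg _
  have hS2 : S ^ 2 = a ^ 2 + b ^ 2 := Real.sq_sqrt (by positivity)
  have hT2 : T ^ 2 = c ^ 2 + dd ^ 2 := Real.sq_sqrt (by positivity)
  have hCS : a * c + b * dd ≤ S * T := by
    rcases le_or_gt (a * c + b * dd) 0 with h | h
    · exact le_trans h (by positivity)
    · have h2 : (a * c + b * dd) ^ 2 ≤ (S * T) ^ 2 := by
        rw [mul_pow, hS2, hT2]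
        nlinarith [sq_nonneg (a * dd - b * c)]
      nlinarith [mul_nonneg hS0 hT0]
  have hle : (a + c) ^ 2 + (b + dd) ^ 2 ≤ (S + T) ^ 2 := by nlinarith
  calc Real.sqrt ((a + c) ^ 2 + (b + dd) ^ 2) ≤ Real.sqrt ((S + T) ^ 2) :=
        Real.sqrt_le_sqrt hle
    _ = S + T := Real.sqrt_sq (by positivity)

lemma nrm2_triangle {d : ℕ} (k ξ k' ξ' : EuclideanSpace ℝ (Fin d)) :
    nrm2 (k + k') (ξ + ξ') ≤ nrm2 k ξ + nrm2 k' ξ' := by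
  rw [nrm2, nrm2, nrm2]
  have h1 : ‖k + k'‖ ≤ ‖k‖ + ‖k'‖ := norm_add_le _ _
  have h2 : ‖ξ + ξ'‖ ≤ ‖ξ‖ + ‖ξ'‖ := norm_add_le _ _
  have h3 : Real.sqrt (‖k + k'‖ ^ 2 + ‖ξ + ξ'‖ ^ 2)
      ≤ Real.sqrt ((‖k‖ + ‖k'‖) ^ 2 + (‖ξ‖ + ‖ξ'‖) ^ 2) := by
    apply Real.sqrt_le_sqrt
    have := norm_nonneg (k + k')
    have := norm_nonneg (ξ + ξ')
    nlinarith [norm_nonneg k, norm_nonneg k', norm_nonneg ξ, norm_nonneg ξ']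
  exact h3.trans (sqrt_pair_le _ _ _ _ (norm_nonneg k) (norm_nonneg ξ)
    (norm_nonneg k') (norm_nonneg ξ'))


theorem stmt5 (d : ℕ) (hd : 1 ≤ d) (lam0 : ℝ) (h0 : 0 < lam0) (h1 : lam0 ≤ 1) :
    ∃ C : ℝ, 0 < C ∧ ∀ lam1 : ℝ, lam0 / 2 ≤ lam1 → lam1 ≤ lam0 →
      ∀ t : ℝ, 0 ≤ t → ∀ k ξ k' ξ' : EuclideanSpace ℝ (Fin d),
        nrm2 k' ξ' ≤ nrm2 k ξ / 8 →
        |Aw lam1 (lam0 / 200) t (k + k') (ξ + ξ') - Aw lam1 (lam0 / 200) t k ξ| ≤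
          C * Aw lam1 (lam0 / 200) t k ξ * Aw lam1 (lam0 / 200) t k' ξ' *
            Real.exp (-(lam1 / 4) * brk2 k' ξ' ^ ((1:ℝ)/3)) * brk2 k ξ ^ (-(2:ℝ)/3) ∧
        |AwSharp lam1 (lam0 / 200) t (k + k') (ξ + ξ') - AwSharp lam1 (lam0 / 200) t k ξ| ≤
          C * AwSharp lam1 (lam0 / 200) t k ξ * AwSharp lam1 (lam0 / 200) t k' ξ' *
            Real.exp (-(lam1 / 4) * brk2 k' ξ' ^ ((1:ℝ)/3)) * brk2 k ξ ^ (-(2:ℝ)/3) := by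
  refine ⟨3000/lam0^3, by positivity, ?_⟩
  intro lam1 hl hl' t ht k ξ k' ξ' h8
  set r := nrm2 k ξ with hrd
  set r' := nrm2 k' ξ' with hr'd
  set r₁ := nrm2 (k + k') (ξ + ξ') with hr₁d
  have hr'0 : 0 ≤ r' := Real.sqrt_nonneg _
  have hhi : r₁ ≤ r + r' := nrm2_triangle k ξ k' ξ'
  have hlo : r - r' ≤ r₁ := by
    have hk : k = (k + k') + (-k') := by abel
    have hξ : ξ = (ξ + ξ') + (-ξ') := by abel
    have h2 : r ≤ r₁ + nrm2 (-k') (-ξ') := by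
      conv_lhs => rw [hrd, hk, hξ]
      exact nrm2_triangle (k + k') (ξ + ξ') (-k') (-ξ')
    have h3 : nrm2 (-k') (-ξ') = r' := by
      rw [hr'd]; simp only [nrm2, norm_neg]
    linarith [h2, h3.le, h3.ge]
  have hbrk : brk2 k ξ = jap r := brk2_eq k ξ
  have hbrk' : brk2 k' ξ' = jap r' := brk2_eq k' ξ'
  have hdiff := lam_diff h0 h1 hl hl' ht hr'0 h8 hlo hhi
  constructor
  · have hb := main_est (t := t) h0 h1 hl hl' hr'0 h8
      (lamW lam1 (lam0/200) t r₁) (lamW lam1 (lam0/200) t r) (lamW lam1 (lam0/200) t r')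
      hdiff.1 (lamW_lower h0 hl ht)
    rw [Aw, Aw, Aw, hbrk, hbrk', ← hrd, ← hr'd, ← hr₁d]
    exact hb
  · have hb := main_est (t := t) h0 h1 hl hl' hr'0 h8
      (lamSharpW lam1 (lam0/200) t r₁) (lamSharpW lam1 (lam0/200) t r)
      (lamSharpW lam1 (lam0/200) t r')
      hdiff.2 (lamSharpW_lower h0 hl ht)
    rw [AwSharp, AwSharp, AwSharp, hbrk, hbrk', ← hrd, ← hr'd, ← hr₁d]
    exact hb
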